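/- Let f be a function from finite bit strings to Bool and let B : ℕ → Bool. Define Z : ℕ → Bool recursively by Z(2n) = B(n) and Z(2n+1) = f(Z↾(2n+1)). Let L be a martingale that does not bet at any odd position, i.e., L(x0) = L(x1) for every string x of odd length. Then there exists a martingale N such that N(B↾(n+1)) = L(Z↾(2n+2)) for every n; in particular, if L succeeds on Z then N succeeds on B. Moreover, if f and L are computable, then N can be chosen computable. -/

import Mathlib

/-!
Take `N := L ∘ insertOddBits f`, where `insertOddBits f y` has the bits of `y` at its even
positions and fills each odd position by applying `f` to the bits before it, so that it sends
`B↾n` to `Z↾2n`. Because `L` does not bet at odd positions, the bit filled in by `f` leaves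
the capital unchanged; hence `N` is fair, and every capital `L (Z↾n)` already occurs as
`N (B↾⌈n/2⌉)`, so success transfers from `Z` to `B`. Computability is preserved because
`insertOddBits f` is a fold of a computable step.
-/

open Filter

/-- The finite bit string consisting of the first `n` bits of the sequence `Z`. -/
def seqTake (Z : ℕ → Bool) (n : ℕ) : List Bool :=
  List.ofFn fun i : Fin n => Z i

/-- A martingale is a positive rational-valued function on bit strings
satisfying the fairness condition `M x = (M x0 + M x1)/2`. -/
def IsMartingale (M : List Bool → ℚ) : Prop :=
  ∀ x : List Bool, 0 < M x ∧ M x = (M (x ++ [false]) + M (x ++ [true])) / 2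

/-- `M` succeeds on `Z` if `limsup_n M (Z↾n) = ∞`. -/
def Succeeds (M : List Bool → ℚ) (Z : ℕ → Bool) : Prop :=
  ∀ c : ℚ, ∃ᶠ n in atTop, c < M (seqTake Z n)

/-- `Z` is computably random if no computable martingale succeeds on it. -/
def ComputablyRandom (Z : ℕ → Bool) : Prop :=
  ∀ M : List Bool → ℚ, Computable M → IsMartingale M → ¬ Succeeds M Z

/-- The martingale `M` does not bet at position `n`:
`M (x0) = M (x1)` for every string `x` of length `n`. -/
def NoBetAt (M : List Bool → ℚ) (n : ℕ) : Prop :=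
  ∀ x : List Bool, x.length = n → M (x ++ [false]) = M (x ++ [true])

theorem Computable.list_foldl {α β σ : Type*} [Primcodable α] [Primcodable β] [Primcodable σ]
    {f : α → List β} {g : α → σ} {h : α → σ × β → σ}
    (hf : Computable f) (hg : Computable g) (hh : Computable₂ h) :
    Computable fun a => (f a).foldl (fun s b => h a (s, b)) (g a) := by
  -- Fold over the first `n` elements by recursion on `n`, then take `n` to be the length.
  have hprefix : Computable₂ fun a n => ((f a).take n).foldl (fun s b => h a (s, b)) (g a) := by
    have := Computable.nat_rec (α := α × ℕ) (σ := σ) (f := fun p => p.2)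
      (g := fun p => g p.1)
      (h := fun p q => Option.casesOn (f p.1)[q.1]? q.2 fun b => h p.1 (q.2, b))
      Computable.snd (hg.comp Computable.fst)
      (Computable.option_casesOn
        (Computable.list_getElem?.comp (hf.comp (Computable.fst.comp Computable.fst))
          (Computable.fst.comp Computable.snd))
        (Computable.snd.comp Computable.snd)
        (hh.comp (Computable.fst.comp (Computable.fst.comp Computable.fst))
          (Computable.pair ((Computable.snd.comp Computable.snd).comp Computable.fst)
            Computable.snd)).to₂)
    refine this.of_eq ?_
    rintro ⟨a, n⟩
    induction n with
    | zero => simp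
    | succ n ih =>
      simp only [ih, List.take_add_one]
      cases (f a)[n]? <;> simp [List.foldl_append]
  exact (hprefix.comp Computable.id (Computable.list_length.comp hf)).of_eq fun a => by simp

def insertOddBits (f : List Bool → Bool) (y : List Bool) : List Bool :=
  y.foldl (fun x b => x ++ [b, f (x ++ [b])]) []

section insertOddBits

variable {f : List Bool → Bool}

@[simp]
lemma insertOddBits_append_singleton (y : List Bool) (b : Bool) :
    insertOddBits f (y ++ [b]) = insertOddBits f y ++ [b, f (insertOddBits f y ++ [b])] := by
  simp [insertOddBits, List.foldl_append]

@[simp]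
lemma length_insertOddBits (y : List Bool) : (insertOddBits f y).length = 2 * y.length := by
  induction y using List.reverseRecOn with
  | nil => rfl
  | append_singleton y b ih => simp [ih]; ring

lemma computable_insertOddBits (hf : Computable f) : Computable (insertOddBits f) := by
  have hx : Computable fun p : List Bool × Bool => p.1 ++ [p.2] :=
    Computable.list_concat.comp Computable.fst Computable.snd
  have hstep : Computable fun p : List Bool × Bool => p.1 ++ [p.2, f (p.1 ++ [p.2])] :=
    (Computable.list_concat.comp hx (hf.comp hx)).of_eq fun p => by simp
  exact Computable.list_foldl Computable.id (Computable.const []) (hstep.comp Computable.snd).to₂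

end insertOddBits

lemma seqTake_succ (Z : ℕ → Bool) (n : ℕ) : seqTake Z (n + 1) = seqTake Z n ++ [Z n] := by
  rw [seqTake, List.ofFn_succ']
  simp [seqTake]

@[simp]
lemma length_seqTake (Z : ℕ → Bool) (n : ℕ) : (seqTake Z n).length = n := by
  simp [seqTake]

lemma insertOddBits_seqTake {f : List Bool → Bool} {B Z : ℕ → Bool}
    (hZeven : ∀ n, Z (2 * n) = B n) (hZodd : ∀ n, Z (2 * n + 1) = f (seqTake Z (2 * n + 1)))
    (n : ℕ) : insertOddBits f (seqTake B n) = seqTake Z (2 * n) := by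
  induction n with
  | zero => rfl
  | succ n ih =>
    have hodd : seqTake Z (2 * n + 1) = seqTake Z (2 * n) ++ [B n] := by
      rw [seqTake_succ, hZeven]
    rw [seqTake_succ, insertOddBits_append_singleton, ih, ← hodd, ← hZodd,
      show 2 * (n + 1) = 2 * n + 1 + 1 by ring, seqTake_succ Z (2 * n + 1), hodd]
    simp

lemma IsMartingale.apply_append_singleton_of_noBetAt {L : List Bool → ℚ} (hL : IsMartingale L)
    {x : List Bool} (hx : NoBetAt L x.length) (c : Bool) : L (x ++ [c]) = L x := by
  have hfair := (hL x).2
  have hsame := hx x rfl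
  cases c <;> linarith

lemma IsMartingale.comp_insertOddBits {L : List Bool → ℚ} (hL : IsMartingale L)
    (hnb : ∀ n, Odd n → NoBetAt L n) (f : List Bool → Bool) :
    IsMartingale (L ∘ insertOddBits f) := by
  intro y
  have hskip (b : Bool) : L (insertOddBits f (y ++ [b])) = L (insertOddBits f y ++ [b]) := by
    rw [insertOddBits_append_singleton, ← List.singleton_append, ← List.append_assoc]
    exact hL.apply_append_singleton_of_noBetAt (hnb _ (by simp)) _
  simpa only [Function.comp, hskip] using hL (insertOddBits f y)

lemma Succeeds.of_le_of_tendsto {M N : List Bool → ℚ} {Z B : ℕ → Bool} {g : ℕ → ℕ}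
    (hg : Tendsto g atTop atTop) (hle : ∀ n, M (seqTake Z n) ≤ N (seqTake B (g n)))
    (hM : Succeeds M Z) : Succeeds N B := fun c =>
  hg.frequently <| (hM c).mono fun n hn => hn.trans_le (hle n)

/-- If the odd bits of `Z` are computed by `f` from the preceding bits and the even bits
copy `B`, then any martingale `L` betting only on even positions transfers to a
martingale `N` on `B` with `N (B↾(n+1)) = L (Z↾(2n+2))`; in particular if `L` succeeds
on `Z` then `N` succeeds on `B`, and `N` is computable whenever `f` and `L` are. -/
theorem transfer_martingale_to_even_bits (f : List Bool → Bool) (B : ℕ → Bool)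
    (Z : ℕ → Bool)
    (hZeven : ∀ n : ℕ, Z (2 * n) = B n)
    (hZodd : ∀ n : ℕ, Z (2 * n + 1) = f (seqTake Z (2 * n + 1)))
    (L : List Bool → ℚ) (hL : IsMartingale L)
    (hnb : ∀ n : ℕ, Odd n → NoBetAt L n) :
    ∃ N : List Bool → ℚ, IsMartingale N ∧
      (∀ n : ℕ, N (seqTake B (n + 1)) = L (seqTake Z (2 * n + 2))) ∧
      (Succeeds L Z → Succeeds N B) ∧
      (Computable f → Computable L → Computable N) := by
  have hprefix := insertOddBits_seqTake hZeven hZodd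
  -- At odd `n` the last bit of `Z↾(n + 1)` is one `L` does not bet on.
  have hcapital (n : ℕ) : L (seqTake Z n) = L (insertOddBits f (seqTake B ((n + 1) / 2))) := by
    obtain ⟨k, rfl | rfl⟩ := Nat.even_or_odd' n
    · rw [hprefix, show (2 * k + 1) / 2 = k by omega]
    · rw [hprefix, show (2 * k + 1 + 1) / 2 = k + 1 by omega,
        show 2 * (k + 1) = 2 * k + 1 + 1 by ring, seqTake_succ Z (2 * k + 1),
        hL.apply_append_singleton_of_noBetAt (hnb _ (by simp))]
  refine ⟨L ∘ insertOddBits f, hL.comp_insertOddBits hnb f, fun n => by simp [hprefix, mul_add],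
    Succeeds.of_le_of_tendsto ?_ fun n => (hcapital n).le,
    fun hf hLc => hLc.comp (computable_insertOddBits hf)⟩
  exact (Nat.tendsto_div_const_atTop two_ne_zero).comp (tendsto_add_atTop_nat 1)
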